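/- Let b_n, for n = 1,2,..., be a sequence of functions in B_Γ. Then there exists a subsequence (b_{n'}) and a function b ∈ B_Γ such that b_{n'} converges pointwise to b on all of ℝ^k, i.e., lim_{n'→∞} b_{n'}(x) = b(x) for every x ∈ ℝ^k. -/

import Mathlib

open MeasureTheory Filter

noncomputable section

abbrev E (k : ℕ) := EuclideanSpace ℝ (Fin k)

def orthant (k : ℕ) : Set (E k) := {x | ∀ i, 0 ≤ x i}

/-- The dot product `g · x` on `ℝ^k`. -/
def dotp {k : ℕ} (g x : E k) : ℝ := ∑ i, g i * x i

def IsAlloc {k : ℕ} (Γ : Set (E k)) (q : E k → E k) : Prop :=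
  ∀ x ∈ orthant k, q x ∈ Γ

def IsIC {k : ℕ} (q : E k → E k) (s : E k → ℝ) : Prop :=
  ∀ x ∈ orthant k, ∀ y ∈ orthant k, dotp (q x) x - s x ≥ dotp (q y) x - s y

def IsIR {k : ℕ} (q : E k → E k) (s : E k → ℝ) : Prop :=
  ∀ x ∈ orthant k, 0 ≤ dotp (q x) x - s x

def IsNPT {k : ℕ} (s : E k → ℝ) : Prop :=
  ∀ x ∈ orthant k, 0 ≤ s x

/-- The set of subgradients of `f` at `x`. -/
def Subgrad {k : ℕ} (f : E k → ℝ) (x : E k) : Set (E k) :=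
  {g | ∀ y, f y - f x ≥ dotp g (y - x)}

/-- `b ∈ B_Γ`: convex on `ℝ^k`, `b 0 = 0`, and a subgradient in `Γ` at every point. -/
def BClass {k : ℕ} (Γ : Set (E k)) (b : E k → ℝ) : Prop :=
  ConvexOn ℝ Set.univ b ∧ b 0 = 0 ∧ ∀ x, (Subgrad b x ∩ Γ).Nonempty

/-- One-sided directional derivative `f′(x;y) = lim_{δ→0⁺} (f(x+δy)-f(x))/δ`. -/
def dirDeriv {k : ℕ} (b : E k → ℝ) (x y : E k) : ℝ :=
  limUnder (nhdsWithin (0:ℝ) (Set.Ioi 0)) fun δ => (b (x + δ • y) - b x) / δ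

/-- The extended buyer payoff function `b(x) = sup_{z ∈ ℝ₊^k} [q(z)·x − s(z)]`. -/
def extPayoff {k : ℕ} (q : E k → E k) (s : E k → ℝ) (x : E k) : ℝ :=
  sSup ((fun z => dotp (q z) x - s z) '' orthant k)

def SellerFavorable {k : ℕ} (q : E k → E k) (s : E k → ℝ) : Prop :=
  ∀ x ∈ orthant k, s x = dirDeriv (extPayoff q s) x x - extPayoff q s x

/-! Subgradients in the bounded set `Γ` make all members of `B_Γ` uniformly Lipschitz, and
`b 0 = 0` then bounds their values pointwise. A subsequence therefore converges on a countable
dense set, and equicontinuity upgrades this to convergence everywhere. The limit lies in `B_Γ`: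
convexity and the subgradient inequality are closed conditions, and compactness of `Γ` provides
a limiting subgradient. -/

open Filter Topology
open scoped NNReal

theorem exists_strictMono_tendsto_pi_of_forall_mem_isCompact {ι α : Type*} [Countable ι]
    [TopologicalSpace α] [FirstCountableTopology α] {K : ι → Set α} (hK : ∀ i, IsCompact (K i))
    {u : ℕ → ι → α} (hu : ∀ n i, u n i ∈ K i) :
    ∃ φ : ℕ → ℕ, StrictMono φ ∧ ∃ L : ι → α, ∀ i, Tendsto (fun n ↦ u (φ n) i) atTop (𝓝 (L i)) :=
  let ⟨L, _, φ, hφ, hL⟩ := (isCompact_univ_pi hK).tendsto_subseq fun n ↦ Set.mem_univ_pi.2 (hu n)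
  ⟨φ, hφ, L, tendsto_pi_nhds.1 hL⟩

theorem Equicontinuous.cauchySeq_of_dense {X α : Type*} [TopologicalSpace X]
    [PseudoMetricSpace α] {F : ℕ → X → α} (hF : Equicontinuous F) {s : Set X} (hs : Dense s)
    (hcauchy : ∀ y ∈ s, CauchySeq (F · y)) (x : X) : CauchySeq (F · x) := by
  rw [Metric.cauchySeq_iff]
  intro ε hε
  have hε3 : 0 < ε / 3 := by positivity
  obtain ⟨y, hys, hxy⟩ := hs.inter_nhds_nonempty (Metric.equicontinuousAt_iff_right.1 (hF x) _ hε3)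
  obtain ⟨N, hN⟩ := Metric.cauchySeq_iff.1 (hcauchy y hys) _ hε3
  refine ⟨N, fun m hm n hn ↦ ?_⟩
  calc dist (F m x) (F n x) ≤ dist (F m x) (F m y) + dist (F m y) (F n y) + dist (F n y) (F n x) :=
        dist_triangle4 _ _ _ _
    _ < ε / 3 + ε / 3 + ε / 3 := by
        gcongr
        · exact hxy m
        · exact hN m hm n hn
        · rw [dist_comm]; exact hxy n
    _ = ε := by ring

section

variable {k : ℕ}

theorem dotp_eq_inner (g x : E k) : dotp g x = inner ℝ g x := by
  simp [dotp, PiLp.inner_apply, mul_comm]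

theorem lipschitzWith_of_forall_subgrad {f : E k → ℝ} {M : ℝ≥0}
    (h : ∀ x, ∃ g ∈ Subgrad f x, ‖g‖ ≤ M) : LipschitzWith M f := by
  refine LipschitzWith.of_le_add_mul M fun x y ↦ ?_
  obtain ⟨g, hg, hgM⟩ := h x
  have hinner : -(M * dist x y) ≤ dotp g (y - x) := by
    rw [dotp_eq_inner, dist_comm, dist_eq_norm]
    calc -(M * ‖y - x‖) ≤ -(‖g‖ * ‖y - x‖) := by gcongr
      _ ≤ inner ℝ g (y - x) := neg_le_of_abs_le (abs_real_inner_le_norm g (y - x))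
  linarith [hg y]

theorem IsCompact.exists_lipschitzWith_of_bClass {Γ : Set (E k)} (hΓ : IsCompact Γ) :
    ∃ M : ℝ≥0, ∀ b, BClass Γ b → LipschitzWith M b := by
  obtain ⟨C, hC⟩ := hΓ.isBounded.exists_norm_le
  refine ⟨C.toNNReal, fun b hb ↦ lipschitzWith_of_forall_subgrad fun x ↦ ?_⟩
  obtain ⟨g, hg, hgΓ⟩ := hb.2.2 x
  exact ⟨g, hg, (hC g hgΓ).trans (Real.le_coe_toNNReal C)⟩

theorem isClosed_setOf_mem_subgrad (x : E k) :
    IsClosed {p : (E k → ℝ) × E k | p.2 ∈ Subgrad p.1 x} := by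
  show IsClosed {p : (E k → ℝ) × E k | ∀ y, p.1 y - p.1 x ≥ dotp p.2 (y - x)}
  simp only [Set.ofPred_forall, dotp_eq_inner]
  exact isClosed_iInter fun y ↦ isClosed_le (by fun_prop) (by fun_prop)

theorem BClass.of_tendsto {Γ : Set (E k)} (hΓ : IsCompact Γ) {F : ℕ → E k → ℝ} {f : E k → ℝ}
    (hF : ∀ n, BClass Γ (F n)) (hlim : ∀ x, Tendsto (F · x) atTop (𝓝 (f x))) : BClass Γ f := by
  have hlim' : Tendsto F atTop (𝓝 f) := tendsto_pi_nhds.2 hlim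
  refine ⟨isClosed_setOfPred_convexOn.mem_of_tendsto hlim' (.of_forall fun n ↦ (hF n).1), ?_, ?_⟩
  · refine tendsto_nhds_unique (hlim 0) ?_
    simp only [fun n ↦ (hF n).2.1, tendsto_const_nhds]
  · intro x
    choose g hg using fun n ↦ (hF n).2.2 x
    obtain ⟨g₀, hg₀, ψ, hψ, hgψ⟩ := hΓ.tendsto_subseq fun n ↦ (hg n).2
    refine ⟨g₀, (isClosed_setOf_mem_subgrad x).mem_of_tendsto
      ((hlim'.comp hψ.tendsto_atTop).prodMk_nhds hgψ) (.of_forall fun n ↦ (hg (ψ n)).1), hg₀⟩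

end

theorem stmt5_general {k : ℕ} (Γ : Set (E k))
    (hΓc : IsCompact Γ)
    (bn : ℕ → E k → ℝ) (hbn : ∀ n, BClass Γ (bn n)) :
    ∃ φ : ℕ → ℕ, StrictMono φ ∧ ∃ b : E k → ℝ, BClass Γ b ∧
      ∀ x : E k, Tendsto (fun n => bn (φ n) x) atTop (nhds (b x)) := by
  obtain ⟨M, hlip⟩ := hΓc.exists_lipschitzWith_of_bClass
  have hbound : ∀ n x, bn n x ∈ Metric.closedBall 0 (M * ‖x‖) := fun n x ↦ by
    simpa [(hbn n).2.1] using (hlip _ (hbn n)).dist_le_mul x 0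
  let D := TopologicalSpace.denseSeq (E k)
  obtain ⟨φ, hφ, L, hL⟩ := exists_strictMono_tendsto_pi_of_forall_mem_isCompact
    (fun i ↦ isCompact_closedBall 0 (M * ‖D i‖)) fun n i ↦ hbound n (D i)
  have hcauchy : ∀ x, CauchySeq fun n ↦ bn (φ n) x :=
    (LipschitzWith.uniformEquicontinuous _ M fun n ↦ hlip _ (hbn (φ n))).equicontinuous
      |>.cauchySeq_of_dense (TopologicalSpace.denseRange_denseSeq (E k))
        (Set.forall_mem_range.2 fun i ↦ (hL i).cauchySeq)
  choose b hb using fun x ↦ cauchySeq_tendsto_of_complete (hcauchy x)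
  exact ⟨φ, hφ, b, BClass.of_tendsto hΓc (fun n ↦ hbn (φ n)) hb, hb⟩

/-- sequential compactness of `B_Γ` under pointwise convergence. -/
theorem stmt5 {k : ℕ} (hk : 1 ≤ k) (Γ : Set (E k)) (hΓne : Γ.Nonempty)
    (hΓc : IsCompact Γ) (hΓ : Γ ⊆ orthant k)
    (bn : ℕ → E k → ℝ) (hbn : ∀ n, BClass Γ (bn n)) :
    ∃ φ : ℕ → ℕ, StrictMono φ ∧ ∃ b : E k → ℝ, BClass Γ b ∧
      ∀ x : E k, Tendsto (fun n => bn (φ n) x) atTop (nhds (b x)) :=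
  stmt5_general Γ hΓc bn hbn
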